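/- arXiv:2302.09348 — 2 statements merged into one kernel-verified Lean document; each statement's English description precedes it below -/
import Mathlib

section
/- Let Z := {x ∈ ℝ^n : A(x)τ(j) ≥ 0 componentwise for all j ∈ J} and, for j ∈ J, let M̄(j) := {k ∈ P : e_kᵀA(x)τ(j) = 0 for all x ∈ Z}. Then M̄(j) = M(j) for all j ∈ J. -/
open Matrix Set Pointwise
open scoped Classical

noncomputable section

/-- The conic hull of a set: all finite nonnegative linear combinations of its elements. -/
def coneOf {E : Type*} [AddCommMonoid E] [Module ℝ E] (S : Set E) : Set E :=
  {x | ∃ (k : ℕ) (c : Fin k → ℝ) (v : Fin k → E),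
    (∀ i, 0 ≤ c i) ∧ (∀ i, v i ∈ S) ∧ x = ∑ i, c i • v i}

/-- The copositive cone: matrices `D` with `tᵀ D t ≥ 0` for all componentwise-nonnegative `t`. -/
def COP (p : ℕ) : Set (Matrix (Fin p) (Fin p) ℝ) :=
  {D | ∀ t : Fin p → ℝ, (∀ k, 0 ≤ t k) → 0 ≤ t ⬝ᵥ D.mulVec t}

/-- The completely positive cone: `conv {t tᵀ : t ≥ 0}`. -/
def CPcone (p : ℕ) : Set (Matrix (Fin p) (Fin p) ℝ) :=
  convexHull ℝ {U | ∃ t : Fin p → ℝ, (∀ k, 0 ≤ t k) ∧ U = vecMulVec t t}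

/-- The standard simplex `T`. -/
def simplexT (p : ℕ) : Set (Fin p → ℝ) :=
  {t | (∀ k, 0 ≤ t k) ∧ ∑ k, t k = 1}

/-- The constraint matrix `𝒜(x) = A₀ + Σ_{m=1}^n x_m A_m`. -/
def slack {n p : ℕ} (A : Fin (n + 1) → Matrix (Fin p) (Fin p) ℝ) (x : Fin n → ℝ) :
    Matrix (Fin p) (Fin p) ℝ :=
  A 0 + ∑ m : Fin n, x m • A m.succ

/-- The feasible set `X = {x : 𝒜(x) ∈ COP^p}`. -/
def feasX {n p : ℕ} (A : Fin (n + 1) → Matrix (Fin p) (Fin p) ℝ) : Set (Fin n → ℝ) :=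
  {x | slack A x ∈ COP p}

/-- The set of normalized immobile indices `T_im`. -/
def Tim {n p : ℕ} (A : Fin (n + 1) → Matrix (Fin p) (Fin p) ℝ) : Set (Fin p → ℝ) :=
  {t | t ∈ simplexT p ∧ ∀ x ∈ feasX A, t ⬝ᵥ (slack A x).mulVec t = 0}

/-- `a(t) = (tᵀ A_m t)_{m=0}^n`. -/
def avec {n p : ℕ} (A : Fin (n + 1) → Matrix (Fin p) (Fin p) ℝ) (t : Fin p → ℝ) :
    Fin (n + 1) → ℝ :=
  fun m => t ⬝ᵥ (A m).mulVec t

/-- `b(k,j) = (e_kᵀ A_m τ(j))_{m=0}^n`. -/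
def bvec {n p : ℕ} {J : Type*} (A : Fin (n + 1) → Matrix (Fin p) (Fin p) ℝ)
    (τ : J → Fin p → ℝ) (k : Fin p) (j : J) : Fin (n + 1) → ℝ :=
  fun m => (A m).mulVec (τ j) k

/-- `M(j) = {k : e_kᵀ 𝒜(x) τ(j) = 0 for all x ∈ X}`. -/
def Mset {n p : ℕ} {J : Type*} (A : Fin (n + 1) → Matrix (Fin p) (Fin p) ℝ)
    (τ : J → Fin p → ℝ) (j : J) : Set (Fin p) :=
  {k | ∀ x ∈ feasX A, (slack A x).mulVec (τ j) k = 0}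

/-- `N_*(j) = {k : e_kᵀ 𝒜(x) τ(j) = 0 for some x ∈ X}`. -/
def Nstar {n p : ℕ} {J : Type*} (A : Fin (n + 1) → Matrix (Fin p) (Fin p) ℝ)
    (τ : J → Fin p → ℝ) (j : J) : Set (Fin p) :=
  {k | ∃ x ∈ feasX A, (slack A x).mulVec (τ j) k = 0}

/-- `B(z) = Σ_{m=0}^n z_m A_m`. -/
def Bmat {n p : ℕ} (A : Fin (n + 1) → Matrix (Fin p) (Fin p) ℝ) (z : Fin (n + 1) → ℝ) :
    Matrix (Fin p) (Fin p) ℝ :=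
  ∑ m, z m • A m

/-- The system `𝒜(x) ∈ COP^p` yields uniform LP duality: for each cost vector `c` for which the
primal value is finite, the Lagrange dual problem is attained with zero duality gap. -/
def UniformLPDuality {n p : ℕ} (A : Fin (n + 1) → Matrix (Fin p) (Fin p) ℝ) : Prop :=
  ∀ c : Fin n → ℝ,
    BddBelow ((fun x => ∑ i, c i * x i) '' feasX A) →
    ∃ U ∈ CPcone p, (∀ m : Fin n, (A m.succ * U).trace = c m) ∧
      (A 0 * U).trace = -sInf ((fun x => ∑ i, c i * x i) '' feasX A)

/-- `Y` is a maximum slack in the system `𝒜(x) ∈ COP^p`: it lies in the relative interior of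
`D = {𝒜(x) : x ∈ X}`. -/
def maxSlack {n p : ℕ} (A : Fin (n + 1) → Matrix (Fin p) (Fin p) ℝ)
    (Y : Matrix (Fin p) (Fin p) ℝ) : Prop :=
  Y ∈ intrinsicInterior ℝ {D | ∃ x ∈ feasX A, D = slack A x}

section AuxCore
variable {p : ℕ}


lemma dot_mulVec_symm (M : Matrix (Fin p) (Fin p) ℝ) (hM : M.IsSymm) (u v : Fin p → ℝ) :
    u ⬝ᵥ M *ᵥ v = v ⬝ᵥ M *ᵥ u := by
  rw [dotProduct_mulVec]
  have h1 : u ᵥ* M = M *ᵥ u := by rw [← Matrix.mulVec_transpose, hM.eq]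
  rw [h1, dotProduct_comm]

lemma qform_expand (M : Matrix (Fin p) (Fin p) ℝ) (hM : M.IsSymm) (t s : Fin p → ℝ) :
    (t + s) ⬝ᵥ M *ᵥ (t + s) = t ⬝ᵥ M *ᵥ t + 2 * (s ⬝ᵥ M *ᵥ t) + s ⬝ᵥ M *ᵥ s := by
  rw [mulVec_add, dotProduct_add, add_dotProduct, add_dotProduct,
    dot_mulVec_symm M hM t s]
  ring

lemma cont_qform (M : Matrix (Fin p) (Fin p) ℝ) :
    Continuous fun u : Fin p → ℝ => u ⬝ᵥ M *ᵥ u := by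
  unfold dotProduct Matrix.mulVec
  exact continuous_finset_sum _ fun k _ =>
    (continuous_apply k).mul (continuous_finset_sum _ fun l _ =>
      continuous_const.mul (continuous_apply l))

/-- First-order condition: a zero of a copositive form has nonnegative "gradient". -/
lemma cop_mulVec_nonneg {M : Matrix (Fin p) (Fin p) ℝ} (hM : M.IsSymm) (hcop : M ∈ COP p)
    {t : Fin p → ℝ} (ht0 : ∀ k, 0 ≤ t k) (htq : t ⬝ᵥ M *ᵥ t = 0) :
    ∀ k, 0 ≤ (M *ᵥ t) k := by
  intro k
  by_contra hneg
  push_neg at hneg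
  set d := (M *ᵥ t) k with hd
  set c := M k k with hc
  set ε : ℝ := -d / (|c| + 1) with hε
  have habs : 0 ≤ |c| := abs_nonneg c
  have hεpos : 0 < ε := by
    apply div_pos (by linarith) (by linarith)
  have hkey : 0 ≤ 2 * ε * d + ε ^ 2 * c := by
    have h1 : ∀ m, 0 ≤ (t + ε • (Pi.single k 1 : Fin p → ℝ)) m := by
      intro m
      by_cases hm : m = k
      · subst hm
        simp only [Pi.add_apply, Pi.smul_apply, Pi.single_eq_same, smul_eq_mul, mul_one]
        have := ht0 m
        linarith
      · simp only [Pi.add_apply, Pi.smul_apply, Pi.single_eq_of_ne hm, smul_eq_mul, mul_zero,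
          add_zero]
        exact ht0 m
    have h2 := hcop _ h1
    rw [qform_expand M hM t (ε • (Pi.single k 1 : Fin p → ℝ)), htq] at h2
    have e1 : (ε • (Pi.single k 1 : Fin p → ℝ)) ⬝ᵥ M *ᵥ t = ε * d := by
      rw [smul_dotProduct, single_dotProduct]
      simp [hd]
    have e2 : (ε • (Pi.single k 1 : Fin p → ℝ)) ⬝ᵥ M *ᵥ (ε • (Pi.single k 1 : Fin p → ℝ)) = ε ^ 2 * c := by
      rw [smul_dotProduct, mulVec_smul, dotProduct_smul, single_dotProduct, mulVec_single]
      simp [hc]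
      ring
    rw [e1, e2] at h2
    linarith
  have hcle : c ≤ |c| := le_abs_self c
  have hεval : ε * (|c| + 1) = -d := by
    rw [hε]; exact div_mul_cancel₀ _ (by positivity)
  have h4 : ε ^ 2 * (|c| + 1) = ε * (-d) := by
    rw [pow_two, mul_assoc, hεval]
  have h5 : ε ^ 2 * c ≤ ε ^ 2 * |c| := by nlinarith [sq_nonneg ε]
  nlinarith [mul_pos hεpos hεpos, mul_pos hεpos (neg_pos.mpr hneg)]

/-- KKT: at a minimizer of the quadratic form over the standard simplex, the components of the
gradient at indices in the support all equal the minimum value. -/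
lemma kkt_eq {M : Matrix (Fin p) (Fin p) ℝ} (hM : M.IsSymm) {t : Fin p → ℝ}
    (ht : t ∈ stdSimplex ℝ (Fin p))
    (hmin : ∀ u ∈ stdSimplex ℝ (Fin p), t ⬝ᵥ M *ᵥ t ≤ u ⬝ᵥ M *ᵥ u) :
    ∀ k, t k ≠ 0 → (M *ᵥ t) k = t ⬝ᵥ M *ᵥ t := by
  -- step: for k in the support and any l, (M *ᵥ t) k ≤ (M *ᵥ t) l
  have step : ∀ k, t k ≠ 0 → ∀ l, (M *ᵥ t) k ≤ (M *ᵥ t) l := by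
    intro k hk l
    rcases eq_or_ne l k with rfl | hlk
    · exact le_refl _
    by_contra hlt
    push_neg at hlt
    set d := (M *ᵥ t) l - (M *ᵥ t) k with hd
    have hdneg : d < 0 := by simp [hd]; linarith
    have htk : 0 < t k := lt_of_le_of_ne (ht.1 k) (Ne.symm hk)
    set s : Fin p → ℝ := (Pi.single l 1 : Fin p → ℝ) - (Pi.single k 1 : Fin p → ℝ) with hs
    have hsl : s l = 1 := by simp [hs, Pi.single_apply, hlk]
    have hsk : s k = -1 := by simp [hs, Pi.single_apply, hlk, Ne.symm hlk]
    set c := s ⬝ᵥ M *ᵥ s with hc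
    set ε : ℝ := min (t k) (-d / (|c| + 1)) with hε
    have habs : 0 ≤ |c| := abs_nonneg c
    have hεpos : 0 < ε := lt_min htk (div_pos (by linarith) (by linarith))
    have hε1 : ε ≤ t k := min_le_left _ _
    have hε2 : ε * (|c| + 1) ≤ -d := by
      have := min_le_right (t k) (-d / (|c| + 1))
      calc ε * (|c| + 1) ≤ (-d / (|c| + 1)) * (|c| + 1) := by
            apply mul_le_mul_of_nonneg_right this (by linarith)
        _ = -d := by field_simp
    -- the perturbed point
    have hmem : t + ε • s ∈ stdSimplex ℝ (Fin p) := by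
      constructor
      · intro m
        rcases eq_or_ne m k with rfl | hmk
        · simp only [Pi.add_apply, Pi.smul_apply, smul_eq_mul, hsk]
          linarith
        rcases eq_or_ne m l with rfl | hml
        · simp only [Pi.add_apply, Pi.smul_apply, smul_eq_mul, hsl]
          have := ht.1 m
          linarith
        · have hsm : s m = 0 := by simp [hs, Pi.single_apply, hmk, hml]
          simp only [Pi.add_apply, Pi.smul_apply, smul_eq_mul, hsm, mul_zero, add_zero]
          exact ht.1 m
      · have hsum : ∑ m, s m = 0 := by
          simp [hs, Finset.sum_sub_distrib, Finset.sum_pi_single]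
        calc ∑ m, (t + ε • s) m = ∑ m, (t m + ε * s m) := by rfl
          _ = (∑ m, t m) + ε * ∑ m, s m := by
              rw [Finset.sum_add_distrib, Finset.mul_sum]
          _ = 1 := by rw [ht.2, hsum]; ring
    have h2 := hmin _ hmem
    rw [qform_expand M hM t (ε • s)] at h2
    have e1 : (ε • s) ⬝ᵥ M *ᵥ t = ε * d := by
      rw [smul_dotProduct]
      have : s ⬝ᵥ M *ᵥ t = d := by
        rw [hs, sub_dotProduct, single_dotProduct, single_dotProduct]
        simp [hd]
      rw [this]; rfl
    have e2 : (ε • s) ⬝ᵥ M *ᵥ (ε • s) = ε ^ 2 * c := by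
      rw [smul_dotProduct, mulVec_smul, dotProduct_smul]
      simp only [smul_eq_mul, ← hc]
      ring
    rw [e1, e2] at h2
    -- 0 ≤ 2εd + ε²c, with ε(|c|+1) ≤ -d, d < 0: contradiction
    have hcle : c ≤ |c| := le_abs_self c
    have h4 : ε ^ 2 * (|c| + 1) ≤ ε * (-d) := by
      rw [pow_two, mul_assoc]
      apply mul_le_mul_of_nonneg_left hε2 (le_of_lt hεpos)
    have h5 : ε ^ 2 * c ≤ ε ^ 2 * |c| := by nlinarith [sq_nonneg ε]
    nlinarith [mul_pos hεpos hεpos, mul_pos hεpos (neg_pos.mpr hdneg)]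
  intro k hk
  have hval : t ⬝ᵥ M *ᵥ t = ∑ l, t l * (M *ᵥ t) l := rfl
  have hub : t ⬝ᵥ M *ᵥ t ≤ (M *ᵥ t) k := by
    rw [hval]
    calc ∑ l, t l * (M *ᵥ t) l ≤ ∑ l, t l * (M *ᵥ t) k := by
          apply Finset.sum_le_sum
          intro l _
          rcases eq_or_ne (t l) 0 with h0 | h0
          · simp [h0]
          · exact mul_le_mul_of_nonneg_left (step l h0 k) (ht.1 l)
      _ = (∑ l, t l) * (M *ᵥ t) k := by rw [Finset.sum_mul]
      _ = (M *ᵥ t) k := by rw [ht.2, one_mul]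
  have hlb : (M *ᵥ t) k ≤ t ⬝ᵥ M *ᵥ t := by
    rw [hval]
    calc (M *ᵥ t) k = (∑ l, t l) * (M *ᵥ t) k := by rw [ht.2, one_mul]
      _ = ∑ l, t l * (M *ᵥ t) k := by rw [Finset.sum_mul]
      _ ≤ ∑ l, t l * (M *ᵥ t) l := by
          apply Finset.sum_le_sum
          intro l _
          exact mul_le_mul_of_nonneg_left (step k hk l) (ht.1 l)
  linarith

lemma stdSimplex_ne (hp : 0 < p) : (stdSimplex ℝ (Fin p)).Nonempty := by
  refine ⟨Pi.single (⟨0, hp⟩ : Fin p) (1 : ℝ), fun k => ?_, by simp⟩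
  rcases eq_or_ne k ⟨0, hp⟩ with rfl | h
  · simp
  · simp [Pi.single_eq_of_ne h]

lemma exists_neg_simplex {M : Matrix (Fin p) (Fin p) ℝ} (h : M ∉ COP p) :
    ∃ s ∈ stdSimplex ℝ (Fin p), s ⬝ᵥ M *ᵥ s < 0 := by
  simp only [COP, Set.mem_setOf_eq, not_forall, not_le] at h
  obtain ⟨t, ht0, htneg⟩ := h
  have hσpos : 0 < ∑ k, t k := by
    rcases (Finset.sum_nonneg fun k _ => ht0 k).lt_or_eq with h | h
    · exact h
    · exfalso
      have ht0' : t = 0 := by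
        funext k
        have h2 := Finset.single_le_sum (fun k _ => ht0 k) (Finset.mem_univ k)
        have h3 : t k ≤ 0 := by rw [h] ; exact h2
        exact le_antisymm h3 (ht0 k)
      rw [ht0'] at htneg
      simp at htneg
  set σ := ∑ k, t k with hσ
  have hinv : 0 < σ⁻¹ := by positivity
  refine ⟨σ⁻¹ • t, ⟨fun k => by
    simp only [Pi.smul_apply, smul_eq_mul]
    exact mul_nonneg hinv.le (ht0 k), ?_⟩, ?_⟩
  · simp only [Pi.smul_apply, smul_eq_mul, ← Finset.mul_sum, ← hσ]
    field_simp
  · rw [smul_dotProduct, mulVec_smul, dotProduct_smul]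
    simp only [smul_eq_mul]
    exact mul_neg_of_pos_of_neg hinv (mul_neg_of_pos_of_neg hinv htneg)

/-- The key perturbation lemma: if `Q` is copositive and `(Q+B)t ≥ 0` for every zero `t` of the
quadratic form of `Q` on the simplex, then `Q + αB` is copositive for some small `α > 0`. -/
lemma perturb_copositive (hp : 0 < p) {Q B : Matrix (Fin p) (Fin p) ℝ}
    (hQ : Q.IsSymm) (hB : B.IsSymm) (hQc : Q ∈ COP p)
    (hyp : ∀ t ∈ stdSimplex ℝ (Fin p), t ⬝ᵥ Q *ᵥ t = 0 → ∀ k, 0 ≤ ((Q + B) *ᵥ t) k) :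
    ∃ α : ℝ, 0 < α ∧ α ≤ 1 ∧ Q + α • B ∈ COP p := by
  by_contra hcon
  push_neg at hcon
  -- a sequence of scales
  set β : ℕ → ℝ := fun i => 1 / (i + 1) with hβ
  have hβpos : ∀ i, 0 < β i := fun i => by positivity
  have hβle : ∀ i, β i ≤ 1 := fun i => by
    rw [hβ]
    rw [div_le_one (by positivity)]
    push_cast
    linarith
  set M : ℕ → Matrix (Fin p) (Fin p) ℝ := fun i => Q + β i • B with hM
  have hMsymm : ∀ i, (M i).IsSymm := fun i => by
    unfold Matrix.IsSymm
    rw [hM]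
    rw [transpose_add, transpose_smul, hQ.eq, hB.eq]
  -- minimizers
  have hmin : ∀ i : ℕ, ∃ t ∈ stdSimplex ℝ (Fin p),
      IsMinOn (fun u => u ⬝ᵥ (M i) *ᵥ u) (stdSimplex ℝ (Fin p)) t :=
    fun i => (isCompact_stdSimplex ℝ (Fin p)).exists_isMinOn (stdSimplex_ne hp)
      (cont_qform (M i)).continuousOn
  choose t ht hmint using hmin
  set lam : ℕ → ℝ := fun i => t i ⬝ᵥ (M i) *ᵥ t i with hlam
  have hlamneg : ∀ i, lam i < 0 := by
    intro i
    obtain ⟨s, hs, hsneg⟩ := exists_neg_simplex (hcon (β i) (hβpos i) (hβle i))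
    exact lt_of_le_of_lt (isMinOn_iff.mp (hmint i) s hs) hsneg
  -- convergent subsequence
  obtain ⟨tb, htb, φ, hφ, hconv⟩ := (isCompact_stdSimplex ℝ (Fin p)).tendsto_subseq ht
  have hβφ0 : Filter.Tendsto (fun i => β (φ i)) Filter.atTop (nhds 0) := by
    apply squeeze_zero (fun i => le_of_lt (hβpos (φ i))) (fun i => ?_)
      tendsto_one_div_add_atTop_nhds_zero_nat
    rw [hβ]
    apply div_le_div_of_nonneg_left (by norm_num) (by positivity)
    have hia : i ≤ φ i := hφ.le_apply
    push_cast
    exact_mod_cast Nat.add_le_add_right hia 1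
  -- limit of the values
  have hqQ : Filter.Tendsto (fun i => (t ∘ φ) i ⬝ᵥ Q *ᵥ (t ∘ φ) i) Filter.atTop
      (nhds (tb ⬝ᵥ Q *ᵥ tb)) := ((cont_qform Q).tendsto tb).comp hconv
  have hqB : Filter.Tendsto (fun i => (t ∘ φ) i ⬝ᵥ B *ᵥ (t ∘ φ) i) Filter.atTop
      (nhds (tb ⬝ᵥ B *ᵥ tb)) := ((cont_qform B).tendsto tb).comp hconv
  have hsplit : ∀ i, lam (φ i) = (t ∘ φ) i ⬝ᵥ Q *ᵥ (t ∘ φ) i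
      + β (φ i) * ((t ∘ φ) i ⬝ᵥ B *ᵥ (t ∘ φ) i) := by
    intro i
    rw [hlam, hM]
    simp only [add_mulVec, smul_mulVec, dotProduct_add, dotProduct_smul, smul_eq_mul,
      Function.comp_apply]
  have hlamlim : Filter.Tendsto (fun i => lam (φ i)) Filter.atTop (nhds (tb ⬝ᵥ Q *ᵥ tb)) := by
    have := hqQ.add (hβφ0.mul hqB)
    rw [zero_mul, add_zero] at this
    exact this.congr fun i => (hsplit i).symm
  have hq0 : tb ⬝ᵥ Q *ᵥ tb = 0 := by
    have hle : tb ⬝ᵥ Q *ᵥ tb ≤ 0 :=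
      le_of_tendsto hlamlim (Filter.Eventually.of_forall fun i => le_of_lt (hlamneg (φ i)))
    exact le_antisymm hle (hQc tb htb.1)
  -- the two nonnegative vectors
  set w : Fin p → ℝ := (Q + B) *ᵥ tb with hw
  have hwpos : ∀ k, 0 ≤ w k := hyp tb htb hq0
  set v : Fin p → ℝ := Q *ᵥ tb with hv
  have hvpos : ∀ k, 0 ≤ v k := cop_mulVec_nonneg hQ hQc htb.1 hq0
  -- eventually the support of tb is contained in the support of the minimizers
  have hsupp : ∀ᶠ i in Filter.atTop, ∀ k, tb k ≠ 0 → 0 < (t ∘ φ) i k := by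
    rw [Filter.eventually_all]
    intro k
    rcases eq_or_ne (tb k) 0 with h0 | h0
    · exact Filter.Eventually.of_forall fun i hk => absurd h0 hk
    · have hpos : 0 < tb k := lt_of_le_of_ne (htb.1 k) (Ne.symm h0)
      have hk : Filter.Tendsto (fun i => (t ∘ φ) i k) Filter.atTop (nhds (tb k)) :=
        (((continuous_apply k).tendsto tb).comp hconv)
      exact (hk.eventually (eventually_gt_nhds hpos)).mono fun i hi _ => hi
  obtain ⟨i, hi⟩ := hsupp.exists
  -- final computation at index i
  set uu : Fin p → ℝ := t (φ i) with huu
  have hi' : ∀ k, tb k ≠ 0 → 0 < uu k := hi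
  set bb : ℝ := β (φ i) with hbb
  have hkkt := kkt_eq (hMsymm (φ i)) (ht (φ i)) (fun u hu => isMinOn_iff.mp (hmint (φ i)) u hu)
  have claim1 : tb ⬝ᵥ (M (φ i)) *ᵥ uu = lam (φ i) := by
    have : ∀ k, tb k * ((M (φ i)) *ᵥ uu) k = tb k * lam (φ i) := by
      intro k
      rcases eq_or_ne (tb k) 0 with h0 | h0
      · rw [h0, zero_mul, zero_mul]
      · rw [hkkt k (ne_of_gt (hi' k h0))]
    calc tb ⬝ᵥ (M (φ i)) *ᵥ uu = ∑ k, tb k * ((M (φ i)) *ᵥ uu) k := rfl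
      _ = ∑ k, tb k * lam (φ i) := Finset.sum_congr rfl fun k _ => this k
      _ = (∑ k, tb k) * lam (φ i) := by rw [Finset.sum_mul]
      _ = lam (φ i) := by rw [htb.2, one_mul]
  have claim2 : tb ⬝ᵥ (M (φ i)) *ᵥ uu = uu ⬝ᵥ v + bb * (uu ⬝ᵥ w - uu ⬝ᵥ v) := by
    have e1 : tb ⬝ᵥ (M (φ i)) *ᵥ uu = tb ⬝ᵥ Q *ᵥ uu + bb * (tb ⬝ᵥ B *ᵥ uu) := by
      rw [hM]
      simp only [add_mulVec, smul_mulVec, dotProduct_add, dotProduct_smul, smul_eq_mul]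
      rfl
    have e2 : tb ⬝ᵥ Q *ᵥ uu = uu ⬝ᵥ v := by
      rw [dot_mulVec_symm Q hQ tb uu, hv]
    have e3 : tb ⬝ᵥ B *ᵥ uu = uu ⬝ᵥ w - uu ⬝ᵥ v := by
      rw [dot_mulVec_symm B hB tb uu]
      have : B *ᵥ tb = w - v := by rw [hw, hv, add_mulVec]; abel
      rw [this, dotProduct_sub]
    rw [e1, e2, e3]
  have hdotv : 0 ≤ uu ⬝ᵥ v :=
    Finset.sum_nonneg fun k _ => mul_nonneg ((ht (φ i)).1 k) (hvpos k)
  have hdotw : 0 ≤ uu ⬝ᵥ w :=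
    Finset.sum_nonneg fun k _ => mul_nonneg ((ht (φ i)).1 k) (hwpos k)
  have hbbpos : 0 < bb := hβpos (φ i)
  have hbble : bb ≤ 1 := hβle (φ i)
  have := hlamneg (φ i)
  rw [← claim1, claim2] at this
  nlinarith

end AuxCore

/-- Nonnegative affine functions vanishing at a point of the intrinsic interior of a convex set
vanish identically on the set. -/
lemma relint_kill {n : ℕ} {X : Set (Fin n → ℝ)} {x₀ : Fin n → ℝ}
    (hx₀ : x₀ ∈ intrinsicInterior ℝ X) {f : (Fin n → ℝ) → ℝ}
    (hf : Continuous f)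
    (haff : ∀ (a b : Fin n → ℝ) (θ : ℝ), f (θ • (a - b) + a) = f a + θ * (f a - f b))
    (h0 : ∀ x ∈ X, 0 ≤ f x) (hz : f x₀ = 0) : ∀ y ∈ X, f y = 0 := by
  obtain ⟨z, hzint, hzeq⟩ := mem_intrinsicInterior.mp hx₀
  intro y hy
  have hyspan : y ∈ affineSpan ℝ X := subset_affineSpan ℝ X hy
  have hx₀span : x₀ ∈ affineSpan ℝ X := by rw [← hzeq]; exact z.2
  have hmemc : ∀ θ : ℝ, θ • (x₀ - y) + x₀ ∈ affineSpan ℝ X := by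
    intro θ
    exact AffineSubspace.smul_vsub_vadd_mem _ θ hx₀span hyspan hx₀span
  set c : ℝ → affineSpan ℝ X := fun θ => ⟨θ • (x₀ - y) + x₀, hmemc θ⟩ with hc
  have hcont : Continuous c :=
    Continuous.subtype_mk ((continuous_id.smul continuous_const).add continuous_const) _
  have hc0 : c 0 = z := by
    apply Subtype.ext
    simp [hc, hzeq]
  have hnhds : c ⁻¹' (interior ((↑) ⁻¹' X : Set (affineSpan ℝ X))) ∈ nhds (0 : ℝ) := by
    apply hcont.continuousAt.preimage_mem_nhds
    rw [hc0]
    exact isOpen_interior.mem_nhds hzint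
  obtain ⟨ε, hεpos, hball⟩ := Metric.mem_nhds_iff.mp hnhds
  set θ : ℝ := ε / 2 with hθ
  have hθpos : 0 < θ := by positivity
  have hθmem : θ ∈ Metric.ball (0 : ℝ) ε := by
    simp only [Metric.mem_ball, Real.dist_eq, sub_zero]
    rw [abs_of_pos hθpos]
    linarith
  have hXmem' : c θ ∈ ((↑) ⁻¹' X : Set (affineSpan ℝ X)) := interior_subset (hball hθmem)
  have hXmem : θ • (x₀ - y) + x₀ ∈ X := hXmem'
  have hval := haff x₀ y θ
  rw [hz] at hval
  have h1 : 0 ≤ f (θ • (x₀ - y) + x₀) := h0 _ hXmem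
  rw [hval] at h1
  have h2 : f y ≤ 0 := by nlinarith
  exact le_antisymm h2 (h0 y hy)

/-- In a finite-dimensional normed real vector space, the convex hull of a compact set
is compact. -/
lemma isCompact_convexHull_of_isCompact {E : Type*} [NormedAddCommGroup E] [NormedSpace ℝ E]
    [FiniteDimensional ℝ E] {s : Set E} (hs : IsCompact s) : IsCompact (convexHull ℝ s) := by
  rcases s.eq_empty_or_nonempty with rfl | ⟨x₀, hx₀⟩
  · rw [convexHull_empty]; exact isCompact_empty
  set D := Module.finrank ℝ E + 1 with hD
  set K : Set ((Fin D → ℝ) × (Fin D → E)) :=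
    (stdSimplex ℝ (Fin D)) ×ˢ (Set.pi Set.univ fun _ => s) with hK
  have hKc : IsCompact K :=
    (isCompact_stdSimplex ℝ _).prod (isCompact_univ_pi fun _ => hs)
  set F : ((Fin D → ℝ) × (Fin D → E)) → E := fun q => ∑ i, q.1 i • q.2 i with hF
  have hFc : Continuous F := continuous_finset_sum _ fun i _ =>
    ((continuous_apply i).comp continuous_fst).smul ((continuous_apply i).comp continuous_snd)
  have himg : convexHull ℝ s = F '' K := by
    apply Subset.antisymm
    · intro x hx
      obtain ⟨ι, hfin, z, w, hzs, hai, hwpos, hwsum, hwz⟩ :=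
        eq_pos_convex_span_of_mem_convexHull hx
      have hcard : Fintype.card ι ≤ D := by
        have h1 := hai.card_le_finrank_succ
        have h2 : Module.finrank ℝ ↥(vectorSpan ℝ (Set.range z)) ≤ Module.finrank ℝ E :=
          Submodule.finrank_le _
        omega
      set r := Fintype.card ι with hr
      set e := Fintype.equivFin ι with he
      set w' : ℕ → ℝ := fun m => if h : m < r then w (e.symm ⟨m, h⟩) else 0 with hw'
      set z' : ℕ → E := fun m => if h : m < r then z (e.symm ⟨m, h⟩) else x₀ with hz'
      refine ⟨(fun i => w' i.val, fun i => z' i.val), ⟨⟨fun i => ?_, ?_⟩, fun i _ => ?_⟩, ?_⟩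
      · by_cases h : (i : ℕ) < r
        · simp only [hw', dif_pos h]
          exact (hwpos _).le
        · simp only [hw', dif_neg h, le_refl]
      · rw [Fin.sum_univ_eq_sum_range w' D]
        rw [← Finset.sum_subset (Finset.range_subset_range.mpr (by omega : r ≤ D))
          (fun m _ hm => by
            simp only [hw', dif_neg (Nat.not_lt.mpr (by simpa using hm))])]
        rw [← Fin.sum_univ_eq_sum_range w' r]
        rw [← hwsum]
        rw [← Equiv.sum_comp e.symm w]
        apply Finset.sum_congr rfl
        intro i _
        simp only [hw', dif_pos i.isLt]
        rfl
      · dsimp only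
        by_cases h : (i : ℕ) < r
        · simp only [hz', dif_pos h]
          exact hzs (Set.mem_range_self _)
        · simp only [hz', dif_neg h]
          exact hx₀
      · simp only [hF]
        rw [show (∑ i : Fin D, w' i.val • z' i.val) = ∑ i : Fin D,
            (fun m => w' m • z' m) i.val from rfl]
        rw [Fin.sum_univ_eq_sum_range (fun m => w' m • z' m) D]
        rw [← Finset.sum_subset (Finset.range_subset_range.mpr (by omega : r ≤ D))
          (fun m _ hm => by
            simp only [hw', dif_neg (Nat.not_lt.mpr (by simpa using hm)), zero_smul])]
        rw [← Fin.sum_univ_eq_sum_range (fun m => w' m • z' m) r]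
        rw [← hwz, ← Equiv.sum_comp e.symm (fun i => w i • z i)]
        apply Finset.sum_congr rfl
        intro i _
        simp only [hw', hz', dif_pos i.isLt]
        rfl
    · rintro _ ⟨⟨w, z⟩, ⟨hw, hzmem⟩, rfl⟩
      have hsum : 0 < ∑ i, w i := by rw [hw.2]; norm_num
      have := Finset.centerMass_mem_convexHull (Finset.univ) (fun i _ => hw.1 i) hsum
        (fun i _ => hzmem i (Set.mem_univ i))
      rwa [Finset.centerMass, hw.2, inv_one, one_smul] at this
  rw [himg]
  exact hKc.image hFc


section SlackAux

variable {n p : ℕ}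

lemma slack_symm (A : Fin (n + 1) → Matrix (Fin p) (Fin p) ℝ) (hA : ∀ m, (A m).IsSymm)
    (x : Fin n → ℝ) : (slack A x).IsSymm := by
  unfold Matrix.IsSymm slack
  rw [transpose_add, Matrix.transpose_sum, (hA 0).eq]
  congr 1
  refine Finset.sum_congr rfl fun m _ => ?_
  rw [transpose_smul, (hA m.succ).eq]

lemma slack_entry (A : Fin (n + 1) → Matrix (Fin p) (Fin p) ℝ) (x : Fin n → ℝ) (i j : Fin p) :
    slack A x i j = A 0 i j + ∑ m, x m * A m.succ i j := by
  simp [slack, Matrix.sum_apply]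

lemma slack_mulVec_rep (A : Fin (n + 1) → Matrix (Fin p) (Fin p) ℝ) (x : Fin n → ℝ)
    (u : Fin p → ℝ) (k : Fin p) :
    (slack A x *ᵥ u) k = ((A 0) *ᵥ u) k + ∑ m, x m * ((A m.succ) *ᵥ u) k := by
  simp only [Matrix.mulVec, dotProduct, slack_entry, add_mul, Finset.sum_add_distrib,
    Finset.sum_mul]
  congr 1
  rw [Finset.sum_comm]
  refine Finset.sum_congr rfl fun m _ => ?_
  rw [Finset.mul_sum]
  refine Finset.sum_congr rfl fun l _ => ?_
  ring

lemma slack_qform_rep (A : Fin (n + 1) → Matrix (Fin p) (Fin p) ℝ) (x : Fin n → ℝ)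
    (t : Fin p → ℝ) :
    t ⬝ᵥ slack A x *ᵥ t = t ⬝ᵥ (A 0) *ᵥ t + ∑ m, x m * (t ⬝ᵥ (A m.succ) *ᵥ t) := by
  simp only [dotProduct, slack_mulVec_rep, mul_add, Finset.sum_add_distrib,
    Finset.mul_sum]
  congr 1
  rw [Finset.sum_comm]
  refine Finset.sum_congr rfl fun m _ => ?_
  refine Finset.sum_congr rfl fun k _ => ?_
  ring

lemma slack_affine (A : Fin (n + 1) → Matrix (Fin p) (Fin p) ℝ) (a b : Fin n → ℝ) (θ : ℝ) :
    slack A (θ • (a - b) + a) = slack A a + θ • (slack A a - slack A b) := by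
  ext i j
  simp only [slack_entry, Matrix.add_apply, Matrix.smul_apply, Matrix.sub_apply, Pi.add_apply,
    Pi.smul_apply, Pi.sub_apply, smul_eq_mul]
  have expand : ∑ m, (θ * (a m - b m) + a m) * A m.succ i j
      = θ * (∑ m, a m * A m.succ i j) - θ * (∑ m, b m * A m.succ i j)
        + ∑ m, a m * A m.succ i j := by
    rw [Finset.mul_sum, Finset.mul_sum, ← Finset.sum_sub_distrib, ← Finset.sum_add_distrib]
    exact Finset.sum_congr rfl fun m _ => by ring
  rw [expand]
  ring

lemma slack_combo (A : Fin (n + 1) → Matrix (Fin p) (Fin p) ℝ) (x y : Fin n → ℝ) {α β : ℝ}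
    (hab : α + β = 1) : slack A (α • x + β • y) = α • slack A x + β • slack A y := by
  ext i j
  simp only [slack_entry, Matrix.add_apply, Matrix.smul_apply, Pi.add_apply, Pi.smul_apply,
    smul_eq_mul]
  have expand : ∑ m, (α * x m + β * y m) * A m.succ i j
      = α * (∑ m, x m * A m.succ i j) + β * (∑ m, y m * A m.succ i j) := by
    rw [Finset.mul_sum, Finset.mul_sum, ← Finset.sum_add_distrib]
    exact Finset.sum_congr rfl fun m _ => by ring
  rw [expand]
  linear_combination (A 0 i j) * hab.symm

lemma feasX_convex (A : Fin (n + 1) → Matrix (Fin p) (Fin p) ℝ) : Convex ℝ (feasX A) := by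
  intro x hx y hy α β ha hb hab
  show slack A (α • x + β • y) ∈ COP p
  rw [slack_combo A x y hab]
  intro t ht
  have : t ⬝ᵥ (α • slack A x + β • slack A y) *ᵥ t
      = α * (t ⬝ᵥ slack A x *ᵥ t) + β * (t ⬝ᵥ slack A y *ᵥ t) := by
    rw [add_mulVec, smul_mulVec, smul_mulVec, dotProduct_add, dotProduct_smul,
      dotProduct_smul]
    simp [smul_eq_mul]
  rw [this]
  exact add_nonneg (mul_nonneg ha (hx t ht)) (mul_nonneg hb (hy t ht))

end SlackAux

/-- With `Z := {x : 𝒜(x)τ(j) ≥ 0 ∀ j ∈ J}` and `M̄(j)` the indices `k` with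
`e_kᵀ𝒜(x)τ(j) = 0` on all of `Z`, one has `M̄(j) = M(j)` for all `j`. -/
theorem stmt_17
    {n p : ℕ} (hp : 1 < p) (hn : 1 ≤ n)
    (A : Fin (n + 1) → Matrix (Fin p) (Fin p) ℝ) (hA : ∀ m, (A m).IsSymm)
    (hX : (feasX A).Nonempty)
    (hTim : (Tim A).Nonempty)
    (J : Type) [Fintype J] [Nonempty J]
    (τ : J → Fin p → ℝ) (hτinj : Function.Injective τ)
    (hτ : Set.range τ = Set.extremePoints ℝ (convexHull ℝ (Tim A))) :
    ∀ j : J,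
      {k : Fin p | ∀ x ∈ {x : Fin n → ℝ | ∀ j' : J, ∀ k' : Fin p,
          0 ≤ (slack A x).mulVec (τ j') k'},
        (slack A x).mulVec (τ j) k = 0} = Mset A τ j := by
  have hp0 : 0 < p := lt_trans zero_lt_one hp
  intro j
  -- the extreme points are immobile indices
  have hTsub : ∀ j' : J, τ j' ∈ Tim A := by
    intro j'
    have hmem : τ j' ∈ Set.range τ := ⟨j', rfl⟩
    rw [hτ] at hmem
    exact extremePoints_convexHull_subset hmem
  -- X ⊆ Z
  have hXZ : ∀ x ∈ feasX A, ∀ (j' : J) (k' : Fin p), 0 ≤ (slack A x *ᵥ τ j') k' := by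
    intro x hx j' k'
    exact cop_mulVec_nonneg (slack_symm A hA x) hx ((hTsub j').1.1) ((hTsub j').2 x hx) k'
  ext k
  simp only [Set.mem_setOf_eq, Mset]
  constructor
  · intro hk x hx
    exact hk x (fun j' k' => hXZ x hx j' k')
  · intro hk xb hxb
    -- `Tim` is compact
    have hTimeq : Tim A = stdSimplex ℝ (Fin p) ∩
        ⋂ x ∈ feasX A, {t : Fin p → ℝ | t ⬝ᵥ slack A x *ᵥ t = 0} := by
      ext t
      simp only [Tim, Set.mem_setOf_eq, Set.mem_inter_iff, Set.mem_iInter]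
      exact Iff.rfl
    have hTimclosed : IsClosed (Tim A) := by
      rw [hTimeq]
      exact (isClosed_stdSimplex ℝ _).inter
        (isClosed_biInter fun x _ => isClosed_eq (cont_qform (slack A x)) continuous_const)
    have hTimsub : Tim A ⊆ stdSimplex ℝ (Fin p) := fun t ht => ht.1
    have hTimcompact : IsCompact (Tim A) :=
      (isCompact_stdSimplex ℝ (Fin p)).of_isClosed_subset hTimclosed hTimsub
    -- Krein-Milman: `convexHull (Tim A) = convexHull (range τ)`
    have hhull : convexHull ℝ (Tim A) = convexHull ℝ (Set.range τ) := by
      have h1 := closure_convexHull_extremePoints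
        (isCompact_convexHull_of_isCompact hTimcompact) (convex_convexHull ℝ (Tim A))
      rw [← hτ] at h1
      rw [← h1, IsClosed.closure_eq (Set.Finite.isClosed_convexHull ℝ (Set.finite_range τ))]
    -- the slack at `xb` maps all of `Tim` into the nonnegative orthant
    have hTimnn : ∀ u ∈ Tim A, ∀ k', 0 ≤ (slack A xb *ᵥ u) k' := by
      intro u hu k'
      have humem : u ∈ convexHull ℝ (Set.range τ) := by
        rw [← hhull]; exact subset_convexHull ℝ _ hu
      have hconv : Convex ℝ {u : Fin p → ℝ | ∀ k', 0 ≤ (slack A xb *ᵥ u) k'} := by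
        intro u1 h1 u2 h2 a b ha hb _ k''
        have heq : slack A xb *ᵥ (a • u1 + b • u2)
            = a • (slack A xb *ᵥ u1) + b • (slack A xb *ᵥ u2) := by
          rw [mulVec_add, mulVec_smul, mulVec_smul]
        rw [heq]
        simp only [Pi.add_apply, Pi.smul_apply, smul_eq_mul]
        exact add_nonneg (mul_nonneg ha (h1 k'')) (mul_nonneg hb (h2 k''))
      have hsub : Set.range τ ⊆ {u : Fin p → ℝ | ∀ k', 0 ≤ (slack A xb *ᵥ u) k'} := by
        rintro _ ⟨j', rfl⟩ k''
        exact hxb j' k''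
      exact convexHull_min hsub hconv humem k'
    -- a relative interior point of `X`
    obtain ⟨x₀, hx₀⟩ := Set.Nonempty.intrinsicInterior (feasX_convex A) hX
    have hx₀X : x₀ ∈ feasX A := intrinsicInterior_subset hx₀
    -- every zero of the quadratic form at `x₀` is an immobile index
    have hE : ∀ t ∈ stdSimplex ℝ (Fin p), t ⬝ᵥ slack A x₀ *ᵥ t = 0 → t ∈ Tim A := by
      intro t ht hq
      refine ⟨ht, ?_⟩
      have hfrep : (fun x : Fin n → ℝ => t ⬝ᵥ slack A x *ᵥ t)
          = fun x => t ⬝ᵥ (A 0) *ᵥ t + ∑ m, x m * (t ⬝ᵥ (A m.succ) *ᵥ t) :=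
        funext fun x => slack_qform_rep A x t
      have hfc : Continuous (fun x : Fin n → ℝ => t ⬝ᵥ slack A x *ᵥ t) := by
        rw [hfrep]
        exact continuous_const.add (continuous_finset_sum _ fun m _ =>
          (continuous_apply m).mul continuous_const)
      have haff : ∀ (a b : Fin n → ℝ) (θ : ℝ),
          t ⬝ᵥ slack A (θ • (a - b) + a) *ᵥ t
            = t ⬝ᵥ slack A a *ᵥ t + θ * (t ⬝ᵥ slack A a *ᵥ t - t ⬝ᵥ slack A b *ᵥ t) := by
        intro a b θ
        rw [slack_affine, add_mulVec, smul_mulVec, sub_mulVec, dotProduct_add,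
          dotProduct_smul]
        simp only [smul_eq_mul, dotProduct_sub]
      exact relint_kill hx₀ hfc haff (fun x hx => hx t ht.1) hq
    -- apply the perturbation lemma
    set Q : Matrix (Fin p) (Fin p) ℝ := slack A x₀ with hQ
    set B : Matrix (Fin p) (Fin p) ℝ := slack A xb - Q with hB
    have hQsymm : Q.IsSymm := slack_symm A hA x₀
    have hBsymm : B.IsSymm := by
      unfold Matrix.IsSymm
      rw [hB, transpose_sub, hQsymm.eq, (slack_symm A hA xb).eq]
    have hQB : Q + B = slack A xb := by rw [hB]; abel
    have hyp : ∀ t ∈ stdSimplex ℝ (Fin p), t ⬝ᵥ Q *ᵥ t = 0 →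
        ∀ k', 0 ≤ ((Q + B) *ᵥ t) k' := by
      intro t ht hq k'
      rw [hQB]
      exact hTimnn t (hE t ht hq) k'
    obtain ⟨α, hαpos, hαle, hcop⟩ := perturb_copositive hp0 hQsymm hBsymm hx₀X hyp
    -- the perturbed point is feasible
    have hslackα : slack A ((-α) • (x₀ - xb) + x₀) = Q + α • B := by
      rw [slack_affine A x₀ xb (-α), hB]
      module
    have hxα : ((-α) • (x₀ - xb) + x₀) ∈ feasX A := by
      show slack A _ ∈ COP p
      rw [hslackα]
      exact hcop
    -- conclude
    have h1 : (slack A ((-α) • (x₀ - xb) + x₀) *ᵥ τ j) k = 0 := hk _ hxα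
    have h2 : (Q *ᵥ τ j) k = 0 := hk x₀ hx₀X
    rw [hslackα, add_mulVec, smul_mulVec] at h1
    simp only [Pi.add_apply, Pi.smul_apply, smul_eq_mul, h2, zero_add] at h1
    have hB0 : (B *ᵥ τ j) k = 0 := by
      rcases mul_eq_zero.mp h1 with h | h
      · exact absurd h (ne_of_gt hαpos)
      · exact h
    have : slack A xb *ᵥ τ j = Q *ᵥ τ j + B *ᵥ τ j := by rw [← add_mulVec, hQB]
    rw [this]
    simp [h2, hB0]
end
end

section
/- Condition A1) holds if and only if there exist a finite index set I, numbers α_i > 0 and vectors t(i) ∈ T_im, i ∈ I, such that the matrix U* := Σ_{i∈I} α_i t(i)t(i)ᵀ satisfies dim span({a(t(i)) : i ∈ I}) = dim span({a(t) : t ∈ T_im}) and A_m • U* = 0 for all m = 0,1,...,n. -/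
open Matrix Set Pointwise
open scoped Classical

noncomputable section

section Aux
open Matrix Set

lemma trace_mul_vecMulVec' {p : ℕ} (B : Matrix (Fin p) (Fin p) ℝ) (u : Fin p → ℝ) :
    (B * vecMulVec u u).trace = u ⬝ᵥ B.mulVec u := by
  simp only [Matrix.trace, Matrix.diag, Matrix.mul_apply, vecMulVec_apply, dotProduct,
    Matrix.mulVec, Finset.mul_sum]
  exact Finset.sum_congr rfl fun k _ => Finset.sum_congr rfl fun l _ => by ring

lemma trace_mul_sum_smul' {p N : ℕ} (B : Matrix (Fin p) (Fin p) ℝ) (α : Fin N → ℝ)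
    (t : Fin N → Fin p → ℝ) :
    (B * ∑ i, α i • vecMulVec (t i) (t i)).trace = ∑ i, α i * (t i ⬝ᵥ B.mulVec (t i)) := by
  rw [Matrix.mul_sum, Matrix.trace_sum]
  exact Finset.sum_congr rfl fun i _ => by
    rw [Matrix.mul_smul, Matrix.trace_smul, trace_mul_vecMulVec']; rfl

end Aux


/-- Condition A1) holds iff there are `αᵢ > 0`, `t(i) ∈ T_im` with
`dim span {a(t(i))} = dim span {a(t) : t ∈ T_im}` and `A_m • Σ αᵢ t(i)t(i)ᵀ = 0` for all `m`. -/
theorem stmt_19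
    {n p : ℕ} (hp : 1 < p) (hn : 1 ≤ n)
    (A : Fin (n + 1) → Matrix (Fin p) (Fin p) ℝ) (hA : ∀ m, (A m).IsSymm)
    (hX : (feasX A).Nonempty)
    (hTim : (Tim A).Nonempty) :
    (∃ W : Submodule ℝ (Fin (n + 1) → ℝ),
        (W : Set (Fin (n + 1) → ℝ)) = coneOf (avec A '' Tim A)) ↔
      ∃ (N : ℕ) (α : Fin N → ℝ) (t : Fin N → Fin p → ℝ),
        (∀ i, 0 < α i) ∧ (∀ i, t i ∈ Tim A) ∧
        Module.finrank ℝ ↥(Submodule.span ℝ (Set.range fun i => avec A (t i))) =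
          Module.finrank ℝ ↥(Submodule.span ℝ (avec A '' Tim A)) ∧
        (∀ m, (A m * ∑ i, α i • vecMulVec (t i) (t i)).trace = 0) := by
    classical
  have hconesub : coneOf (avec A '' Tim A) ⊆
      (Submodule.span ℝ (avec A '' Tim A) : Set (Fin (n + 1) → ℝ)) := by
    rintro x ⟨k, c, v, hc, hv, rfl⟩
    exact Submodule.sum_smul_mem _ _ fun i _ => Submodule.subset_span (hv i)
  constructor
  · rintro ⟨W, hW⟩
    obtain ⟨b, hbsub, hbspan, hbli⟩ := exists_linearIndependent ℝ (avec A '' Tim A)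
    have hbfin : b.Finite := hbli.setFinite
    haveI := hbfin.fintype
    set r := Fintype.card b with hr
    let eb : Fin r ≃ b := (Fintype.equivFin b).symm
    have hchoice : ∀ i : Fin r, ∃ u, u ∈ Tim A ∧ avec A u = (eb i : Fin (n + 1) → ℝ) := by
      intro i
      obtain ⟨u, hu, huv⟩ := hbsub (eb i).2
      exact ⟨u, hu, huv⟩
    choose t ht hta using hchoice
    have hmemcone : ∀ u ∈ Tim A, avec A u ∈ coneOf (avec A '' Tim A) := by
      intro u hu
      exact ⟨1, fun _ => 1, fun _ => avec A u, fun _ => zero_le_one,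
        fun _ => ⟨u, hu, rfl⟩, by simp⟩
    have hsumW : ∑ i : Fin r, avec A (t i) ∈ W :=
      Submodule.sum_mem _ fun i _ => by
        have h := hmemcone (t i) (ht i); rw [← hW] at h; exact h
    have hnegW : -(∑ i : Fin r, avec A (t i)) ∈ coneOf (avec A '' Tim A) := by
      rw [← hW]; exact Submodule.neg_mem _ hsumW
    obtain ⟨k, c, v, hc, hv, hvsum⟩ := hnegW
    have hschoice : ∀ j : Fin k, ∃ u, u ∈ Tim A ∧ avec A u = v j := by
      intro j
      obtain ⟨u, hu, huv⟩ := hv j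
      exact ⟨u, hu, huv⟩
    choose s hs hsa using hschoice
    set β : Fin r ⊕ Fin k → ℝ := Sum.elim (fun _ => (1 : ℝ)) c with hβ
    set τ : Fin r ⊕ Fin k → Fin p → ℝ := Sum.elim t s with hτdef
    have hβ0 : ∀ i, 0 ≤ β i := by rintro (i | j); exacts [zero_le_one, hc j]
    have hτTim : ∀ i, τ i ∈ Tim A := by rintro (i | j); exacts [ht i, hs j]
    have hzero : ∑ i : Fin r ⊕ Fin k, β i • avec A (τ i) = 0 := by
      rw [Fintype.sum_sum_type]
      have h1 : ∀ i : Fin r, β (Sum.inl i) • avec A (τ (Sum.inl i)) = avec A (t i) := by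
        intro i; simp [hβ, hτdef]
      have h2 : ∑ j : Fin k, β (Sum.inr j) • avec A (τ (Sum.inr j))
          = -(∑ i : Fin r, avec A (t i)) := by
        rw [hvsum]
        exact Finset.sum_congr rfl fun j _ => by simp [hβ, hτdef, hsa j]
      rw [Finset.sum_congr rfl fun i _ => h1 i, h2, add_neg_cancel]
    haveI hdp : DecidablePred (fun i : Fin r ⊕ Fin k => 0 < β i) := fun i => Real.decidableLT 0 (β i)
    haveI hft : Fintype {i : Fin r ⊕ Fin k // 0 < β i} := Subtype.fintype _
    let e : Fin (Fintype.card {i : Fin r ⊕ Fin k // 0 < β i}) ≃ {i : Fin r ⊕ Fin k // 0 < β i} :=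
      (Fintype.equivFin _).symm
    have key : ∀ (G : (Fin p → ℝ) → (Fin (n + 1) → ℝ)),
        ∑ i, β (e i) • G (τ (e i)) = ∑ i : Fin r ⊕ Fin k, β i • G (τ i) := by
      intro G
      set_option synthInstance.maxHeartbeats 1000000 in
      rw [Equiv.sum_comp e (fun i : {i : Fin r ⊕ Fin k // 0 < β i} => β i.1 • G (τ i.1))]
      rw [← Finset.sum_subtype (Finset.univ.filter (fun i => 0 < β i)) (by simp)
        (fun i => β i • G (τ i))]
      exact Finset.sum_filter_of_ne fun x _ hx =>
        (hβ0 x).lt_of_ne fun h => hx (by rw [← h, zero_smul])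
    refine ⟨_, fun i => β (e i), fun i => τ (e i), fun i => (e i).2, fun i => hτTim _, ?_, ?_⟩
    · apply le_antisymm
      · exact Submodule.finrank_mono (Submodule.span_mono
          (Set.range_subset_iff.mpr fun i => Set.mem_image_of_mem _ (hτTim _)))
      · have hbrange : b ⊆ Set.range fun i => avec A (τ (e i)) := by
          intro x hx
          have hβpos : 0 < β (Sum.inl (eb.symm ⟨x, hx⟩)) := by simp [hβ]
          refine ⟨e.symm ⟨Sum.inl (eb.symm ⟨x, hx⟩), hβpos⟩, ?_⟩
          simp only [Equiv.apply_symm_apply]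
          show avec A (τ (Sum.inl (eb.symm ⟨x, hx⟩))) = x
          rw [show τ (Sum.inl (eb.symm ⟨x, hx⟩)) = t (eb.symm ⟨x, hx⟩) from rfl,
            hta (eb.symm ⟨x, hx⟩), Equiv.apply_symm_apply]
        calc Module.finrank ℝ ↥(Submodule.span ℝ (avec A '' Tim A))
            = Module.finrank ℝ ↥(Submodule.span ℝ b) := by rw [hbspan]
          _ ≤ _ := Submodule.finrank_mono (Submodule.span_mono hbrange)
    · intro m
      rw [trace_mul_sum_smul']
      have hz := congrFun ((key (avec A)).trans hzero) m
      simpa [avec, Finset.sum_apply] using hz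
  · rintro ⟨N, α, t, hαpos, htTim, hrank, htrace⟩
    refine ⟨Submodule.span ℝ (avec A '' Tim A), Set.Subset.antisymm ?_ hconesub⟩
    have hzero : ∑ i, α i • avec A (t i) = 0 := by
      funext m
      have h := htrace m
      rw [trace_mul_sum_smul'] at h
      simpa [avec, Finset.sum_apply] using h
    have hspan_eq : Submodule.span ℝ (Set.range fun i => avec A (t i))
        = Submodule.span ℝ (avec A '' Tim A) :=
      Submodule.eq_of_le_of_finrank_eq
        (Submodule.span_mono (Set.range_subset_iff.mpr fun i =>
          Set.mem_image_of_mem _ (htTim i))) hrank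
    intro w hw
    have hw' : w ∈ Submodule.span ℝ (Set.range fun i => avec A (t i)) := by
      rw [hspan_eq]; exact hw
    obtain ⟨lam, hlam⟩ := (Submodule.mem_span_range_iff_exists_fun ℝ).mp hw'
    set M := ∑ j, |lam j| / α j with hM
    refine ⟨N, fun i => lam i + M * α i, fun i => avec A (t i), ?_,
      fun i => Set.mem_image_of_mem _ (htTim i), ?_⟩
    · intro i
      have h1 : |lam i| / α i ≤ M :=
        Finset.single_le_sum (f := fun j => |lam j| / α j)
          (fun j _ => div_nonneg (abs_nonneg _) (hαpos j).le) (Finset.mem_univ i)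
      have h2 : |lam i| ≤ M * α i := by
        rw [div_le_iff₀ (hαpos i)] at h1; linarith
      show (0:ℝ) ≤ lam i + M * α i
      linarith [neg_abs_le (lam i)]
    · have hsplit : ∑ i, (lam i + M * α i) • avec A (t i)
          = (∑ i, lam i • avec A (t i)) + M • ∑ i, α i • avec A (t i) := by
        rw [Finset.smul_sum, ← Finset.sum_add_distrib]
        exact Finset.sum_congr rfl fun i _ => by rw [add_smul, smul_smul]
      rw [hsplit, hzero, smul_zero, add_zero, hlam]
end
end
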